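/- In the Bose construction Steiner loop over ℤ/n (n odd), if 7 is invertible in ℤ/n, then for distinct x, y ∈ ℤ/n and any i ∈ ℤ/3 the associator of (x,i), (x,i+1), (y,i−1) is nontrivial: ((x,i)*(x,i+1))*(y,i−1) ≠ (x,i)*((x,i+1)*(y,i−1)). -/
import Mathlib


def boseMul (n : ℕ) : Option (ZMod n × ZMod 3) → Option (ZMod n × ZMod 3) → Option (ZMod n × ZMod 3)
  | none, s => s
  | s, none => s
  | some (x, i), some (y, j) =>
    if x = y then
      if i = j then none else some (x, -i - j)
    else
      if j = i then some ((x + y) * (2 : ZMod n)⁻¹, i + 1)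
      else if j = i + 1 then some (2 * y - x, i)
      else some (2 * x - y, j)

abbrev BoseLoop (n : ℕ) : Type := Option (ZMod n × ZMod 3)

instance (n : ℕ) : Mul (BoseLoop n) := ⟨boseMul n⟩
instance (n : ℕ) : One (BoseLoop n) := ⟨none⟩

lemma zmod3_ne_succ (i : ZMod 3) : i ≠ i + 1 := by revert i; decide
lemma zmod3_eq1 (i : ZMod 3) : -i - (i + 1) = i - 1 := by revert i; decide
lemma zmod3_ne2 (i : ZMod 3) : i - 1 ≠ i + 1 + 1 → False := by revert i; decide
lemma zmod3_eq3 (i : ZMod 3) : i - 1 = i + 1 + 1 := by revert i; decide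
lemma zmod3_ne5 (i : ZMod 3) : i - 1 ≠ i + 1 := by revert i; decide
lemma zmod3_ne4 (i : ZMod 3) : i + 1 ≠ i := by revert i; decide

/-- If 7 is invertible in ZMod n, then for distinct x, y the associator of
(x,i), (x,i+1), (y,i-1) is nontrivial. -/
theorem bose_associator_nontrivial (n : ℕ) (hpos : 0 < n) (hn : Odd n)
    (h7 : IsUnit (7 : ZMod n)) (x y : ZMod n) (hxy : x ≠ y) (i : ZMod 3) :
    ((some (x, i) : BoseLoop n) * some (x, i + 1)) * some (y, i - 1)
      ≠ some (x, i) * (some (x, i + 1) * some (y, i - 1)) := by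
  have : NeZero n := ⟨hpos.ne'⟩
  have hu2 : IsUnit (2 : ZMod n) := by
    rw [show ((2 : ZMod n)) = ((2 : ℕ) : ZMod n) by norm_num, ZMod.isUnit_iff_coprime]
    simpa [Nat.coprime_two_left] using hn
  -- 2y - x ≠ x
  have hxy2 : x ≠ 2 * y - x := by
    intro h
    apply hxy
    have : 2 * x = 2 * y := by ring_nf; linear_combination h
    exact hu2.mul_left_cancel this
  show boseMul n (boseMul n (some (x, i)) (some (x, i + 1))) (some (y, i - 1))
      ≠ boseMul n (some (x, i)) (boseMul n (some (x, i + 1)) (some (y, i - 1)))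
  simp only [boseMul, if_pos rfl, if_neg (zmod3_ne_succ i), if_neg hxy, zmod3_eq1,
    if_neg (zmod3_ne5 i), if_pos (zmod3_eq3 i), if_neg (zmod3_ne4 i), if_neg hxy2, if_pos rfl]
  intro h
  have h1 : (x + y) * (2 : ZMod n)⁻¹ = 2 * (2 * y - x) - x := by
    simpa [if_neg hxy] using congrArg (fun o => o.elim 0 Prod.fst) h
  have h2 := congrArg (· * (2 : ZMod n)) h1
  simp only [mul_assoc, ZMod.inv_mul_of_unit _ hu2, mul_one] at h2
  have h7' : 7 * x = 7 * y := by linear_combination h2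
  exact hxy (h7.mul_left_cancel h7')
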